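/- arXiv:1809.09069 — 6 statements merged into one kernel-verified Lean document; each statement's English description precedes it below -/
import Mathlib

section
/- Let α, β, σ > 0, set d = -√(α² + 2βσ²), b = (α - d)/(2β), c = (-α - d)/(2β), and G(τ) = (e^{dτ} - 1)/(b + c·e^{dτ}). Then G satisfies the Riccati ODE G'(τ) = (σ²/2)G(τ)² - αG(τ) - β with initial condition G(0) = 0. -/
open Real

/-
With E = e^{dτ} and D = b + cE, the quotient rule gives G' = d(b + c)E / D², and
b + c = -d/β. Clearing D² turns the Riccati equation into a polynomial identity in E
whose coefficients agree exactly because d² = α² + 2βσ².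
-/

theorem hasDerivAt_exp_sub_one_div (b c d τ : ℝ) (hD : b + c * exp (d * τ) ≠ 0) :
    HasDerivAt (fun t => (exp (d * t) - 1) / (b + c * exp (d * t)))
      (d * (b + c) * exp (d * τ) / (b + c * exp (d * τ)) ^ 2) τ := by
  have hexp : HasDerivAt (fun t => exp (d * t)) (exp (d * τ) * d) τ :=
    ((hasDerivAt_id τ).const_mul d).exp.congr_deriv (by simp)
  exact ((hexp.sub_const 1).div ((hexp.const_mul c).const_add b) hD).congr_deriv (by ring)

theorem riccati_div_identity {α β σ d b c : ℝ} (hβ : β ≠ 0)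
    (hd : d ^ 2 = α ^ 2 + 2 * β * σ ^ 2)
    (hb : b = (α - d) / (2 * β)) (hc : c = (-α - d) / (2 * β))
    {E : ℝ} (hD : b + c * E ≠ 0) :
    d * (b + c) * E / (b + c * E) ^ 2 =
      σ ^ 2 / 2 * ((E - 1) / (b + c * E)) ^ 2 - α * ((E - 1) / (b + c * E)) - β := by
  rw [div_pow, div_eq_iff (pow_ne_zero 2 hD)]
  field_simp
  subst hb hc
  field_simp
  linear_combination (E - 1) ^ 2 * hd

theorem riccati_denom_pos {α β σ d x : ℝ} (hα : 0 < α) (hβ : 0 < β)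
    (hd : d = -√(α ^ 2 + 2 * β * σ ^ 2)) (hx : 0 ≤ x) :
    0 < (α - d) / (2 * β) + (-α - d) / (2 * β) * x := by
  have hle : α ≤ -d := by
    rw [hd, neg_neg]
    exact le_sqrt_of_sq_le (by nlinarith [sq_nonneg σ])
  have hb : 0 < (α - d) / (2 * β) := div_pos (by linarith) (by positivity)
  have hc : 0 ≤ (-α - d) / (2 * β) := div_nonneg (by linarith) (by positivity)
  positivity

theorem stmt0_general (α β σ : ℝ) (hα : 0 < α) (hβ : 0 < β)
    (d b c : ℝ)
    (hd : d = -Real.sqrt (α ^ 2 + 2 * β * σ ^ 2))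
    (hb : b = (α - d) / (2 * β))
    (hc : c = (-α - d) / (2 * β))
    (G : ℝ → ℝ)
    (hG : ∀ τ, G τ = (Real.exp (d * τ) - 1) / (b + c * Real.exp (d * τ))) :
    G 0 = 0 ∧
      ∀ τ, HasDerivAt G (σ ^ 2 / 2 * (G τ) ^ 2 - α * G τ - β) τ := by
  have hd2 : d ^ 2 = α ^ 2 + 2 * β * σ ^ 2 := by
    rw [hd, neg_sq, sq_sqrt (by positivity)]
  refine ⟨by simp [hG], fun τ => ?_⟩
  have hD : b + c * exp (d * τ) ≠ 0 := by
    rw [hb, hc]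
    exact (riccati_denom_pos hα hβ hd (exp_pos _).le).ne'
  rw [hG τ, ← riccati_div_identity hβ.ne' hd2 hb hc hD, funext hG]
  exact hasDerivAt_exp_sub_one_div b c d τ hD

/-- The function G(τ) = (e^{dτ} - 1)/(b + c·e^{dτ}) solves the Riccati ODE
    G' = (σ²/2)G² - αG - β with G(0) = 0. -/
theorem stmt0 (α β σ : ℝ) (hα : 0 < α) (hβ : 0 < β) (hσ : 0 < σ)
    (d b c : ℝ)
    (hd : d = -Real.sqrt (α ^ 2 + 2 * β * σ ^ 2))
    (hb : b = (α - d) / (2 * β))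
    (hc : c = (-α - d) / (2 * β))
    (G : ℝ → ℝ)
    (hG : ∀ τ, G τ = (Real.exp (d * τ) - 1) / (b + c * Real.exp (d * τ))) :
    G 0 = 0 ∧
      ∀ τ, HasDerivAt G (σ ^ 2 / 2 * (G τ) ^ 2 - α * G τ - β) τ :=
  stmt0_general α β σ hα hβ d b c hd hb hc G hG
end

section
/- Fix τ > 0, μ ∈ ℝ, η > 0, α, σ > 0. As β → 0⁺, F(τ) = exp(-(μ + η/b)τ + η((b+c)/(bc))·ln(b + c·e^{dτ}) - η((b+c)/(bc))·ln(b + c)) tends to exp(-μτ), where d = -√(α² + 2βσ²), b = (α - d)/(2β), c = (-α - d)/(2β). -/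
/-!
With `s = √(α² + 2βσ²)` one has `b = (α + s)/(2β)`, `c = (s - α)/(2β)`, hence `b + c = s/β` and
`bc = σ²/(2β)`. The exponent then becomes
`-(μ + 2βη/(α + s))τ + (2ηs/σ²) log((α + s + (s - α)e^{-sτ})/(2s))`, which, unlike `b` and `c`,
has no singularity at `β = 0`: it is continuous there, and since `s → α` its value is `-μτ`.
-/

open Filter Real Topology

section BondExponent

variable {α σ β s b c : ℝ}

lemma add_div_mul_eq_two_mul_div_sq (hβ : β ≠ 0) (hs : s ^ 2 = α ^ 2 + 2 * β * σ ^ 2)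
    (hb : b = (α + s) / (2 * β)) (hc : c = (s - α) / (2 * β)) :
    (b + c) / (b * c) = 2 * s / σ ^ 2 := by
  have hsum : b + c = s / β := by
    rw [hb, hc]; field_simp; ring
  have hprod : b * c = σ ^ 2 / (2 * β) := by
    rw [hb, hc, div_mul_div_comm, div_eq_div_iff (by positivity) (by positivity)]
    linear_combination (2 * β) * hs
  rw [hsum, hprod, div_div_eq_mul_div]
  congr 1
  field_simp

lemma log_add_mul_sub_log_add_eq (hα : 0 < α) (hβ : 0 < β) (hαs : α ≤ s)
    (hb : b = (α + s) / (2 * β)) (hc : c = (s - α) / (2 * β)) {E : ℝ} (hE : 0 ≤ E) :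
    log (b + c * E) - log (b + c) = log ((α + s + (s - α) * E) / (2 * s)) := by
  have hs : 0 < s := hα.trans_le hαs
  have hsα : 0 ≤ s - α := by linarith
  have hX : 0 < b + c * E := by rw [hb, hc]; positivity
  have hY : 0 < b + c := by rw [hb, hc]; positivity
  rw [← log_div hX.ne' hY.ne', hb, hc]
  congr 1
  field_simp
  ring

end BondExponent

noncomputable def bondExponent (α σ η μ τ β s : ℝ) : ℝ :=
  -(μ + 2 * β * η / (α + s)) * τ
    + 2 * η * s / σ ^ 2 * log ((α + s + (s - α) * exp (-s * τ)) / (2 * s))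

lemma exponent_eq_bondExponent {α σ η μ τ β s b c : ℝ} (hα : 0 < α) (hβ : 0 < β)
    (hs : s ^ 2 = α ^ 2 + 2 * β * σ ^ 2) (hαs : α ≤ s)
    (hb : b = (α + s) / (2 * β)) (hc : c = (s - α) / (2 * β)) :
    -(μ + η / b) * τ + η * ((b + c) / (b * c)) * log (b + c * exp (-s * τ))
      - η * ((b + c) / (b * c)) * log (b + c) = bondExponent α σ η μ τ β s := by
  have hηb : η / b = 2 * β * η / (α + s) := by rw [hb, div_div_eq_mul_div, mul_comm η]
  calc _ = -(μ + η / b) * τ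
        + η * ((b + c) / (b * c)) * (log (b + c * exp (-s * τ)) - log (b + c)) := by ring
    _ = _ := by
      rw [hηb, add_div_mul_eq_two_mul_div_sq hβ.ne' hs hb hc,
        log_add_mul_sub_log_add_eq hα hβ hαs hb hc (exp_pos _).le, bondExponent]
      ring

lemma bondExponent_zero (α σ η μ τ : ℝ) (hα : α ≠ 0) : bondExponent α σ η μ τ 0 α = -μ * τ := by
  simp [bondExponent, ← two_mul, hα]

lemma continuousAt_bondExponent {α : ℝ} (σ η μ τ : ℝ) (hα : 0 < α) :
    ContinuousAt (fun p : ℝ × ℝ => bondExponent α σ η μ τ p.1 p.2) (0, α) := by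
  unfold bondExponent
  fun_prop (disch := (norm_num; positivity))

lemma tendsto_bondExponent_sqrt {α : ℝ} (σ η μ τ : ℝ) (hα : 0 < α) :
    Tendsto (fun β => bondExponent α σ η μ τ β √(α ^ 2 + 2 * β * σ ^ 2)) (𝓝 0) (𝓝 (-μ * τ)) := by
  have hsqrt : Tendsto (fun β : ℝ => √(α ^ 2 + 2 * β * σ ^ 2)) (𝓝 0) (𝓝 α) := by
    have : ContinuousAt (fun β : ℝ => √(α ^ 2 + 2 * β * σ ^ 2)) 0 := by fun_prop
    have h0 : √(α ^ 2 + 2 * 0 * σ ^ 2) = α := by simp [sqrt_sq hα.le]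
    simpa only [h0] using this.tendsto
  have hcomp := (continuousAt_bondExponent σ η μ τ hα).tendsto.comp (tendsto_id.prodMk_nhds hsqrt)
  rwa [bondExponent_zero α σ η μ τ hα.ne'] at hcomp

theorem stmt8_general (α σ η μ τ : ℝ) (hα : 0 < α) :
    Filter.Tendsto
      (fun β : ℝ =>
        let d := -Real.sqrt (α ^ 2 + 2 * β * σ ^ 2)
        let b := (α - d) / (2 * β)
        let c := (-α - d) / (2 * β)
        Real.exp (-(μ + η / b) * τ
          + η * ((b + c) / (b * c)) * Real.log (b + c * Real.exp (d * τ))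
          - η * ((b + c) / (b * c)) * Real.log (b + c)))
      (nhdsWithin 0 (Set.Ioi 0)) (nhds (Real.exp (-μ * τ))) := by
  refine ((continuous_exp.tendsto _).comp
    ((tendsto_bondExponent_sqrt σ η μ τ hα).mono_left nhdsWithin_le_nhds)).congr' ?_
  filter_upwards [self_mem_nhdsWithin] with β (hβ : 0 < β)
  have hαs : α ≤ √(α ^ 2 + 2 * β * σ ^ 2) :=
    le_sqrt_of_sq_le (le_add_of_nonneg_right (by positivity))
  rw [Function.comp_apply, ← exponent_eq_bondExponent hα hβ (sq_sqrt (by positivity)) hαs rfl rfl]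
  ring_nf

/-- For fixed τ > 0, F(τ) → e^{-μτ} as β → 0⁺. -/
theorem stmt8 (α σ η μ τ : ℝ) (hα : 0 < α) (hσ : 0 < σ) (hη : 0 < η) (hτ : 0 < τ) :
    Filter.Tendsto
      (fun β : ℝ =>
        let d := -Real.sqrt (α ^ 2 + 2 * β * σ ^ 2)
        let b := (α - d) / (2 * β)
        let c := (-α - d) / (2 * β)
        Real.exp (-(μ + η / b) * τ
          + η * ((b + c) / (b * c)) * Real.log (b + c * Real.exp (d * τ))
          - η * ((b + c) / (b * c)) * Real.log (b + c)))
      (nhdsWithin 0 (Set.Ioi 0)) (nhds (Real.exp (-μ * τ))) :=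
  stmt8_general α σ η μ τ hα
end

section
/- The function f(x, v, τ) = exp(C(τ) + D(τ)v + iφx), with C, D: [0,∞) → ℂ differentiable, satisfies the PDE (1/2)σ_x²v·f_xx + ρσ_xσv·f_xv + (1/2)σ²v·f_vv + ζv·f_x + (a - b̃v)·f_v - f_τ = 0 for all x, v ∈ ℝ and τ ≥ 0 if and only if D' = -(1/2)σ_x²φ² + ρσ_xσ·iφ·D + (1/2)σ²D² + ζiφ - b̃D and C' = aD. -/
/-!
Every partial derivative of `f = exp (C τ + D τ v + iφx)` is `f` times a polynomial factor
(`iφ` in `x`, `D` in `v`, `C' + D' v` in `τ`), so the PDE operator applied to `f` equals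
`-f · (P(τ) v + Q(τ))`, where `P` and `Q` are the differences of the two sides of the ODEs
for `D` and `C`.
Since `f` never vanishes, the PDE holds for all `v` iff this affine function of `v` vanishes
identically, i.e. iff `P = Q = 0`.
-/

open Complex

theorem hasDerivAt_cexp_add_mul (c d : ℂ) (t : ℝ) :
    HasDerivAt (fun s : ℝ => exp (c + d * s)) (d * exp (c + d * t)) t := by
  have hid : HasDerivAt (fun s : ℝ => (s : ℂ)) 1 t := (hasDerivAt_id t).ofReal_comp
  simpa [mul_comm] using ((hid.const_mul d).const_add c).cexp

theorem deriv_cexp_add_mul (c d : ℂ) :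
    deriv (fun s : ℝ => exp (c + d * s)) = fun s : ℝ => d * exp (c + d * s) :=
  funext fun t => (hasDerivAt_cexp_add_mul c d t).deriv

theorem deriv_cexp_add_mul_add (c d e : ℂ) :
    deriv (fun s : ℝ => exp (c + d * s + e)) = fun s : ℝ => d * exp (c + d * s + e) := by
  simp only [add_right_comm c, deriv_cexp_add_mul]

theorem forall_mul_ofReal_add_eq_zero_iff (p q : ℂ) :
    (∀ v : ℝ, p * v + q = 0) ↔ p = 0 ∧ q = 0 := by
  refine ⟨fun h => ?_, fun ⟨hp, hq⟩ v => by simp [hp, hq]⟩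
  have hq : q = 0 := by simpa using h 0
  exact ⟨by simpa [hq] using h 1, hq⟩

theorem heston_operator_cexp_affine (σx ρ σ ζ a bb φ : ℝ) (C D C' D' : ℝ → ℂ)
    (hC : ∀ τ, HasDerivAt C (C' τ) τ) (hD : ∀ τ, HasDerivAt D (D' τ) τ) (x v τ : ℝ) :
    let f : ℝ → ℝ → ℝ → ℂ := fun x v τ => exp (C τ + D τ * v + I * φ * x)
    (σx ^ 2 / 2 : ℂ) * v * deriv (fun y : ℝ => deriv (fun y' : ℝ => f y' v τ) y) x
          + (ρ * σx * σ : ℂ) * v * deriv (fun y : ℝ => deriv (fun w : ℝ => f y w τ) v) x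
          + (σ ^ 2 / 2 : ℂ) * v * deriv (fun w : ℝ => deriv (fun w' : ℝ => f x w' τ) w) v
          + (ζ : ℂ) * v * deriv (fun y : ℝ => f y v τ) x
          + ((a : ℂ) - (bb : ℂ) * v) * deriv (fun w : ℝ => f x w τ) v
          - deriv (fun t : ℝ => f x v t) τ
      = -((D' τ - (-(σx ^ 2 / 2 : ℂ) * φ ^ 2 + (ρ * σx * σ : ℂ) * I * φ * D τ
            + (σ ^ 2 / 2 : ℂ) * (D τ) ^ 2 + (ζ : ℂ) * I * φ - (bb : ℂ) * D τ)) * v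
          + (C' τ - (a : ℂ) * D τ)) * f x v τ := by
  intro f
  have hτ : deriv (fun t : ℝ => f x v t) τ = f x v τ * (C' τ + D' τ * v) :=
    (((hC τ).add ((hD τ).mul_const (v : ℂ))).add_const (I * φ * x)).cexp.deriv
  simp only [f] at hτ ⊢
  simp only [hτ, deriv_cexp_add_mul, deriv_cexp_add_mul_add, deriv_const_mul_field']
  linear_combination (σx ^ 2 / 2 * v * φ ^ 2 * exp (C τ + D τ * v + I * φ * x) : ℂ) * I_mul_I

theorem stmt12_general (σx ρ σ ζ a bb φ : ℝ)
    (C D C' D' : ℝ → ℂ)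
    (hC : ∀ τ, HasDerivAt C (C' τ) τ)
    (hD : ∀ τ, HasDerivAt D (D' τ) τ)
    (f : ℝ → ℝ → ℝ → ℂ)
    (hf : ∀ x v τ : ℝ, f x v τ = Complex.exp (C τ + D τ * v + Complex.I * φ * x)) :
    (∀ x v τ : ℝ, 0 ≤ τ →
        (σx ^ 2 / 2 : ℂ) * v * deriv (fun y : ℝ => deriv (fun y' : ℝ => f y' v τ) y) x
          + (ρ * σx * σ : ℂ) * v * deriv (fun y : ℝ => deriv (fun w : ℝ => f y w τ) v) x
          + (σ ^ 2 / 2 : ℂ) * v * deriv (fun w : ℝ => deriv (fun w' : ℝ => f x w' τ) w) v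
          + (ζ : ℂ) * v * deriv (fun y : ℝ => f y v τ) x
          + ((a : ℂ) - (bb : ℂ) * v) * deriv (fun w : ℝ => f x w τ) v
          - deriv (fun t : ℝ => f x v t) τ = 0) ↔
      (∀ τ : ℝ, 0 ≤ τ →
        D' τ = -(σx ^ 2 / 2 : ℂ) * φ ^ 2 + (ρ * σx * σ : ℂ) * Complex.I * φ * D τ
            + (σ ^ 2 / 2 : ℂ) * (D τ) ^ 2 + (ζ : ℂ) * Complex.I * φ - (bb : ℂ) * D τ ∧
        C' τ = (a : ℂ) * D τ) := by
  obtain rfl : f = fun (x v τ : ℝ) => exp (C τ + D τ * v + I * φ * x) :=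
    funext fun x => funext fun v => funext (hf x v)
  simp only [heston_operator_cexp_affine σx ρ σ ζ a bb φ C D C' D' hC hD, mul_eq_zero,
    neg_eq_zero, exp_ne_zero, or_false]
  constructor
  · intro h τ hτ
    simpa only [sub_eq_zero] using
      (forall_mul_ofReal_add_eq_zero_iff _ _).1 fun v => h 0 v τ hτ
  · intro h x v τ hτ
    exact (forall_mul_ofReal_add_eq_zero_iff _ _).2 (by simpa only [sub_eq_zero] using h τ hτ) v

open Complex in
/-- f(x,v,τ) = exp(C(τ) + D(τ)v + iφx) satisfies the Heston characteristic PDE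
    iff C and D satisfy the corresponding ODE system. -/
theorem stmt12 (σx ρ σ ζ a bb φ : ℝ) (hσ : 0 < σ) (hσx : 0 < σx)
    (C D C' D' : ℝ → ℂ)
    (hC : ∀ τ, HasDerivAt C (C' τ) τ)
    (hD : ∀ τ, HasDerivAt D (D' τ) τ)
    (f : ℝ → ℝ → ℝ → ℂ)
    (hf : ∀ x v τ : ℝ, f x v τ = Complex.exp (C τ + D τ * v + Complex.I * φ * x)) :
    (∀ x v τ : ℝ, 0 ≤ τ →
        (σx ^ 2 / 2 : ℂ) * v * deriv (fun y : ℝ => deriv (fun y' : ℝ => f y' v τ) y) x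
          + (ρ * σx * σ : ℂ) * v * deriv (fun y : ℝ => deriv (fun w : ℝ => f y w τ) v) x
          + (σ ^ 2 / 2 : ℂ) * v * deriv (fun w : ℝ => deriv (fun w' : ℝ => f x w' τ) w) v
          + (ζ : ℂ) * v * deriv (fun y : ℝ => f y v τ) x
          + ((a : ℂ) - (bb : ℂ) * v) * deriv (fun w : ℝ => f x w τ) v
          - deriv (fun t : ℝ => f x v t) τ = 0) ↔
      (∀ τ : ℝ, 0 ≤ τ →
        D' τ = -(σx ^ 2 / 2 : ℂ) * φ ^ 2 + (ρ * σx * σ : ℂ) * Complex.I * φ * D τ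
            + (σ ^ 2 / 2 : ℂ) * (D τ) ^ 2 + (ζ : ℂ) * Complex.I * φ - (bb : ℂ) * D τ ∧
        C' τ = (a : ℂ) * D τ) :=
  stmt12_general σx ρ σ ζ a bb φ C D C' D' hC hD f hf
end

section
/- For constants a, σ > 0, b_j, ρ ∈ ℝ, φ ∈ ℝ \ {0}, ζ ∈ ℝ, define d = √((ρσφi - b_j)² - σ²(2ζφi - φ²)), g = (b_j - ρσφi + d)/(b_j - ρσφi - d), D(τ) = ((b_j - ρσφi + d)/σ²)·(1 - e^{dτ})/(1 - g·e^{dτ}). Then D satisfies the complex Riccati equation D'(τ) = (1/2)σ²D² + (ρσφi - b_j)D + (ζφi - φ²/2) with D(0) = 0, provided 1 - g·e^{dτ} ≠ 0 on the interval considered. -/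
/-!
The quotient rule gives `D' = k d (g - 1) e^{dτ} / (1 - g e^{dτ})²` for
`D = k (1 - e^{dτ}) / (1 - g e^{dτ})`. With `b = b_j - ρσφi`, `k = (b + d)/σ²` and
`g = (b + d)/(b - d)`, this is a rational identity in `e^{dτ}` matching the Riccati right-hand side,
once the constant term `ζφi - φ²/2` is rewritten as `(b² - d²)/(2σ²)` using the defining equation of `d`.
-/

open Complex

theorem hasDerivAt_cexp_mul_ofReal (d : ℂ) (t : ℝ) :
    HasDerivAt (fun t : ℝ => cexp (d * t)) (d * cexp (d * t)) t := by
  simpa [mul_comm] using ((hasDerivAt_id (t : ℂ)).const_mul d).cexp.comp_ofReal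

theorem hasDerivAt_one_sub_cexp_div (k g d : ℂ) {t : ℝ}
    (ht : 1 - g * cexp (d * t) ≠ 0) :
    HasDerivAt (fun t : ℝ => k * (1 - cexp (d * t)) / (1 - g * cexp (d * t)))
      (k * d * (g - 1) * cexp (d * t) / (1 - g * cexp (d * t)) ^ 2) t := by
  have hE := hasDerivAt_cexp_mul_ofReal d t
  have hnum : HasDerivAt (fun t : ℝ => k * (1 - cexp (d * t))) (k * (0 - d * cexp (d * t))) t :=
    ((hasDerivAt_const t 1).sub hE).const_mul k
  have hden : HasDerivAt (fun t : ℝ => 1 - g * cexp (d * t)) (0 - g * (d * cexp (d * t))) t :=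
    (hasDerivAt_const t 1).sub (hE.const_mul g)
  exact (hnum.div hden ht).congr_deriv (by ring)

theorem hestonD_riccati_identity {s b d E : ℂ} (hs : s ≠ 0) (hbd : b - d ≠ 0)
    (hE : 1 - (b + d) / (b - d) * E ≠ 0) :
    (b + d) / s * d * ((b + d) / (b - d) - 1) * E / (1 - (b + d) / (b - d) * E) ^ 2
      = s / 2 * ((b + d) / s * (1 - E) / (1 - (b + d) / (b - d) * E)) ^ 2
        - b * ((b + d) / s * (1 - E) / (1 - (b + d) / (b - d) * E))
        + (b ^ 2 - d ^ 2) / (2 * s) := by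
  have hX : b - d - (b + d) * E ≠ 0 := by
    contrapose! hE
    rw [div_mul_eq_mul_div, one_sub_div hbd, hE, zero_div]
  field_simp
  ring

/-- Heston's `D` with `s = σ²`, `b = b_j - ρσφi`, so that `g = (b + d) / (b - d)`. -/
noncomputable def hestonD (s b d : ℂ) (t : ℝ) : ℂ :=
  (b + d) / s * (1 - cexp (d * t)) / (1 - (b + d) / (b - d) * cexp (d * t))

theorem hasDerivAt_hestonD {s b d : ℂ} (hs : s ≠ 0) (hbd : b - d ≠ 0) {t : ℝ}
    (ht : 1 - (b + d) / (b - d) * cexp (d * t) ≠ 0) :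
    HasDerivAt (hestonD s b d)
      (s / 2 * hestonD s b d t ^ 2 - b * hestonD s b d t + (b ^ 2 - d ^ 2) / (2 * s)) t :=
  (hasDerivAt_one_sub_cexp_div _ _ d ht).congr_deriv (hestonD_riccati_identity hs hbd ht)

theorem stmt13_general (σ bj ρ φ ζ : ℝ) (hσ : 0 < σ)
    (d g : ℂ)
    (hd2 : d ^ 2 = ((ρ : ℂ) * σ * φ * Complex.I - bj) ^ 2
        - (σ : ℂ) ^ 2 * (2 * ζ * φ * Complex.I - (φ : ℂ) ^ 2))
    (hden : (bj : ℂ) - (ρ : ℂ) * σ * φ * Complex.I - d ≠ 0)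
    (hg : g = ((bj : ℂ) - (ρ : ℂ) * σ * φ * Complex.I + d)
        / ((bj : ℂ) - (ρ : ℂ) * σ * φ * Complex.I - d))
    (D : ℝ → ℂ)
    (hD : ∀ τ : ℝ, D τ = (((bj : ℂ) - (ρ : ℂ) * σ * φ * Complex.I + d) / (σ : ℂ) ^ 2)
        * (1 - Complex.exp (d * τ)) / (1 - g * Complex.exp (d * τ))) :
    D 0 = 0 ∧
      ∀ τ : ℝ, 1 - g * Complex.exp (d * τ) ≠ 0 →
        HasDerivAt D ((σ : ℂ) ^ 2 / 2 * (D τ) ^ 2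
          + ((ρ : ℂ) * σ * φ * Complex.I - bj) * D τ
          + ((ζ : ℂ) * φ * Complex.I - (φ : ℂ) ^ 2 / 2)) τ := by
  set b : ℂ := (bj : ℂ) - (ρ : ℂ) * σ * φ * Complex.I
  obtain rfl : D = hestonD ((σ : ℂ) ^ 2) b d := by
    funext τ
    rw [hD, hg, hestonD]
  have hs : (σ : ℂ) ^ 2 ≠ 0 := pow_ne_zero 2 (ofReal_ne_zero.mpr hσ.ne')
  have hc : (ζ : ℂ) * φ * I - (φ : ℂ) ^ 2 / 2 = (b ^ 2 - d ^ 2) / (2 * (σ : ℂ) ^ 2) := by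
    rw [eq_div_iff (mul_ne_zero two_ne_zero hs)]
    linear_combination hd2
  refine ⟨by simp [hestonD], fun τ hτ => ?_⟩
  rw [hg] at hτ
  rw [hc, show (ρ : ℂ) * σ * φ * I - bj = -b by ring, neg_mul, ← sub_eq_add_neg]
  exact hasDerivAt_hestonD hs hden hτ

/-- Heston's closed-form D(τ) solves the complex Riccati equation
    D' = (σ²/2)D² + (ρσφi - b_j)D + (ζφi - φ²/2) with D(0) = 0. -/
theorem stmt13 (a σ bj ρ φ ζ : ℝ) (ha : 0 < a) (hσ : 0 < σ) (hφ : φ ≠ 0)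
    (d g : ℂ)
    (hd2 : d ^ 2 = ((ρ : ℂ) * σ * φ * Complex.I - bj) ^ 2
        - (σ : ℂ) ^ 2 * (2 * ζ * φ * Complex.I - (φ : ℂ) ^ 2))
    (hd0 : d ≠ 0)
    (hden : (bj : ℂ) - (ρ : ℂ) * σ * φ * Complex.I - d ≠ 0)
    (hg : g = ((bj : ℂ) - (ρ : ℂ) * σ * φ * Complex.I + d)
        / ((bj : ℂ) - (ρ : ℂ) * σ * φ * Complex.I - d))
    (D : ℝ → ℂ)
    (hD : ∀ τ : ℝ, D τ = (((bj : ℂ) - (ρ : ℂ) * σ * φ * Complex.I + d) / (σ : ℂ) ^ 2)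
        * (1 - Complex.exp (d * τ)) / (1 - g * Complex.exp (d * τ))) :
    D 0 = 0 ∧
      ∀ τ : ℝ, 1 - g * Complex.exp (d * τ) ≠ 0 →
        HasDerivAt D ((σ : ℂ) ^ 2 / 2 * (D τ) ^ 2
          + ((ρ : ℂ) * σ * φ * Complex.I - bj) * D τ
          + ((ζ : ℂ) * φ * Complex.I - (φ : ℂ) ^ 2 / 2)) τ :=
  stmt13_general σ bj ρ φ ζ hσ d g hd2 hden hg D hD
end

section
/- With D(τ) as in Heston's solution and C(τ) = rφiτ + (a/σ²)·{(b_j - ρσφi + d)τ - 2·Log((1 - g·e^{dτ})/(1 - g))}, assuming a continuous branch of the logarithm along τ ↦ (1 - g·e^{dτ})/(1 - g), C satisfies C'(τ) = rφi + a·D(τ) with C(0) = 0. -/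
/-!
A continuous logarithm `L` of a path `f` through nonzero values is locally the principal
logarithm of `f τ / f τ₀` shifted by `L τ₀`: both have exponential `f τ / f τ₀` and are close to
`0` near `τ₀`, where `exp` is injective. Hence `L' = f' / f`, which for
`f τ = (1 - g e^{dτ}) / (1 - g)` is `-g d e^{dτ} / (1 - g e^{dτ})`, and the relation
`g (β - d) = β + d` with `β = b_j - ρσφi` turns `C'` into `rφi + a D`.
-/

open Filter Topology

theorem Complex.eventually_log_exp_eq {α : Type*} {l : Filter α} {z : α → ℂ}
    (hz : Tendsto z l (𝓝 0)) : ∀ᶠ t in l, log (exp (z t)) = z t := by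
  have him : Tendsto (fun t => (z t).im) l (𝓝 0) := (continuous_im.tendsto 0).comp hz
  filter_upwards [him (Ioo_mem_nhds (neg_neg_of_pos Real.pi_pos) Real.pi_pos)] with t ht
  exact log_exp ht.1 ht.2.le

theorem ContinuousWithinAt.hasDerivWithinAt_of_cexp_eq {L f : ℝ → ℂ} {f' : ℂ} {s : Set ℝ}
    {x : ℝ} (hL : ContinuousWithinAt L s x) (hx : x ∈ s)
    (hLf : ∀ t ∈ s, Complex.exp (L t) = f t) (hf : HasDerivWithinAt f f' s x) :
    HasDerivWithinAt L (f' / f x) s x := by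
  have hfx : f x ≠ 0 := hLf x hx ▸ Complex.exp_ne_zero _
  have hlog : HasDerivWithinAt (fun t => L x + Complex.log (f t / f x)) (f' / f x) s x := by
    simpa [hfx] using ((hf.div_const (f x)).clog_real (by simp [hfx])).const_add (L x)
  refine hlog.congr_of_eventuallyEq ?_ (by simp [hfx])
  have hLx : Tendsto (fun t => L t - L x) (𝓝[s] x) (𝓝 0) := by
    simpa using hL.sub_const (L x)
  filter_upwards [Complex.eventually_log_exp_eq hLx, self_mem_nhdsWithin] with t ht hts
  rw [Complex.exp_sub, hLf t hts, hLf x hx] at ht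
  rw [ht, add_sub_cancel]

theorem stmt14_general (r a T σ bj ρ φ : ℝ)
    (d g : ℂ)
    (hden : (bj : ℂ) - (ρ : ℂ) * σ * φ * Complex.I - d ≠ 0)
    (hg : g = ((bj : ℂ) - (ρ : ℂ) * σ * φ * Complex.I + d)
        / ((bj : ℂ) - (ρ : ℂ) * σ * φ * Complex.I - d))
    (D : ℝ → ℂ)
    (hD : ∀ τ : ℝ, D τ = (((bj : ℂ) - (ρ : ℂ) * σ * φ * Complex.I + d) / (σ : ℂ) ^ 2)
        * (1 - Complex.exp (d * τ)) / (1 - g * Complex.exp (d * τ)))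
    (L : ℝ → ℂ)
    (hLcont : ContinuousOn L (Set.Icc 0 T))
    (hL0 : L 0 = 0)
    (hLexp : ∀ τ ∈ Set.Icc (0 : ℝ) T,
        Complex.exp (L τ) = (1 - g * Complex.exp (d * τ)) / (1 - g))
    (C : ℝ → ℂ)
    (hC : ∀ τ : ℝ, C τ = (r : ℂ) * φ * Complex.I * τ
        + ((a : ℂ) / (σ : ℂ) ^ 2)
          * (((bj : ℂ) - (ρ : ℂ) * σ * φ * Complex.I + d) * τ - 2 * L τ)) :
    C 0 = 0 ∧
      ∀ τ ∈ Set.Icc (0 : ℝ) T,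
        HasDerivWithinAt C ((r : ℂ) * φ * Complex.I + (a : ℂ) * D τ)
          (Set.Icc 0 T) τ := by
  set β : ℂ := (bj : ℂ) - (ρ : ℂ) * σ * φ * Complex.I
  have hgβ : g * (β - d) = β + d := by rw [hg]; exact div_mul_cancel₀ _ hden
  obtain rfl : C = _ := funext hC
  refine ⟨by simp [hL0], fun τ hτ => ?_⟩
  have hτ' : HasDerivAt (fun t : ℝ => (t : ℂ)) 1 τ := (hasDerivAt_id τ).ofReal_comp
  have hN : HasDerivAt (fun t : ℝ => 1 - g * Complex.exp (d * t))
      (-(g * (Complex.exp (d * τ) * d))) τ := by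
    simpa using ((hτ'.const_mul d).cexp.const_mul g).const_sub 1
  have hL := (hLcont τ hτ).hasDerivWithinAt_of_cexp_eq hτ hLexp
    (hN.div_const (1 - g)).hasDerivWithinAt
  obtain ⟨hNτ, hg1⟩ := div_ne_zero_iff.mp (hLexp τ hτ ▸ Complex.exp_ne_zero (L τ))
  refine ((hτ'.const_mul _).hasDerivWithinAt.add
    (((hτ'.const_mul (β + d)).hasDerivWithinAt.sub (hL.const_mul 2)).const_mul
      ((a : ℂ) / (σ : ℂ) ^ 2))).congr_deriv ?_
  rw [hD]
  field_simp
  -- `(β + d) (1 - g e) + 2 g d e = (β + d) (1 - e)` because `g (β - d) = β + d`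
  linear_combination (-((a : ℂ) / (σ : ℂ) ^ 2 * Complex.exp (d * τ))) * hgβ

/-- With a continuous branch L of the logarithm along τ ↦ (1 - g·e^{dτ})/(1 - g),
    the function C(τ) = rφiτ + (a/σ²)((b_j - ρσφi + d)τ - 2L(τ)) satisfies
    C' = rφi + aD with C(0) = 0. -/
theorem stmt14 (r a T σ bj ρ φ : ℝ) (hT : 0 < T) (hσ : 0 < σ)
    (d g : ℂ) (hd0 : d ≠ 0) (hg1 : g ≠ 1)
    (hden : (bj : ℂ) - (ρ : ℂ) * σ * φ * Complex.I - d ≠ 0)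
    (hg : g = ((bj : ℂ) - (ρ : ℂ) * σ * φ * Complex.I + d)
        / ((bj : ℂ) - (ρ : ℂ) * σ * φ * Complex.I - d))
    (hne : ∀ τ ∈ Set.Icc (0 : ℝ) T, 1 - g * Complex.exp (d * τ) ≠ 0)
    (D : ℝ → ℂ)
    (hD : ∀ τ : ℝ, D τ = (((bj : ℂ) - (ρ : ℂ) * σ * φ * Complex.I + d) / (σ : ℂ) ^ 2)
        * (1 - Complex.exp (d * τ)) / (1 - g * Complex.exp (d * τ)))
    (L : ℝ → ℂ)
    (hLcont : ContinuousOn L (Set.Icc 0 T))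
    (hL0 : L 0 = 0)
    (hLexp : ∀ τ ∈ Set.Icc (0 : ℝ) T,
        Complex.exp (L τ) = (1 - g * Complex.exp (d * τ)) / (1 - g))
    (C : ℝ → ℂ)
    (hC : ∀ τ : ℝ, C τ = (r : ℂ) * φ * Complex.I * τ
        + ((a : ℂ) / (σ : ℂ) ^ 2)
          * (((bj : ℂ) - (ρ : ℂ) * σ * φ * Complex.I + d) * τ - 2 * L τ)) :
    C 0 = 0 ∧
      ∀ τ ∈ Set.Icc (0 : ℝ) T,
        HasDerivWithinAt C ((r : ℂ) * φ * Complex.I + (a : ℂ) * D τ)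
          (Set.Icc 0 T) τ :=
  stmt14_general r a T σ bj ρ φ d g hden hg D hD L hLcont hL0 hLexp C hC
end

section
/- If G: [0,∞) → ℝ is continuously differentiable, G(0) = 0, and G solves G' = (σ²/2)G² - αG - β with α, β, σ > 0, then G(τ) < 0 for all τ > 0 and G(τ) > G₋ for all τ ≥ 0, where G₋ = (α - √(α² + 2βσ²))/σ² is the negative root of (σ²/2)x² - αx - β = 0. -/
/-!
Write `f x = σ²/2 x² - α x - β` and `G₋ < 0 < G₊` for its roots, `K = √(α² + 2βσ²)`.
The identity `f x + K (x - G₋) = σ²/2 (x - G₋)²` makes `(G - G₋) e^{Kτ}` nondecreasing, and it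
starts at `-G₋ > 0`, so `G > G₋`. Since `f 0 = -β < 0`, the solution cannot cross `0` upwards,
so `G ≤ 0`. Then `G` lies in `(G₋, G₊)`, where `f < 0`, so `G` is strictly decreasing from `G 0 = 0`.
-/

open Set

theorem lt_of_hasDerivWithinAt_add_mul_sub_nonneg {u u' : ℝ → ℝ} {a c K : ℝ}
    (hu : ContinuousOn u (Ici a)) (hu' : ∀ t ∈ Ici a, HasDerivWithinAt u (u' t) (Ici a) t)
    (hK : ∀ t ∈ Ici a, 0 ≤ u' t + K * (u t - c)) (ha : c < u a) {t : ℝ} (ht : a ≤ t) :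
    c < u t := by
  have hmono : MonotoneOn (fun t => (u t - c) * Real.exp (K * t)) (Ici a) := by
    refine monotoneOn_of_hasDerivWithinAt_nonneg
      (f' := fun t => (u' t + K * (u t - c)) * Real.exp (K * t)) (convex_Ici a)
      ((hu.sub continuousOn_const).mul (by fun_prop)) (fun x hx => ?_) (fun x hx => ?_)
    · rw [interior_Ici] at hx ⊢
      have hexp : HasDerivWithinAt (fun t => Real.exp (K * t)) (Real.exp (K * x) * K)
          (Ioi a) x := by
        simpa using ((hasDerivAt_id x).const_mul K).exp.hasDerivWithinAt
      exact ((((hu' x (mem_Ici.2 hx.le)).mono Ioi_subset_Ici_self).sub_const c).mul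
        hexp).congr_deriv (by ring)
    · rw [interior_Ici] at hx
      exact mul_nonneg (hK x (mem_Ici.2 hx.le)) (Real.exp_pos _).le
  have hpos : 0 < (u t - c) * Real.exp (K * t) :=
    lt_of_lt_of_le (mul_pos (sub_pos.mpr ha) (Real.exp_pos _)) (hmono self_mem_Ici ht ht)
  exact sub_pos.mp (pos_of_mul_pos_left hpos (Real.exp_pos _).le)

theorem nonpos_of_hasDerivWithinAt_neg_of_eq_zero {u u' : ℝ → ℝ} {a : ℝ}
    (hu : ContinuousOn u (Ici a)) (hu' : ∀ t ∈ Ici a, HasDerivWithinAt u (u' t) (Ici a) t)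
    (hzero : ∀ t ∈ Ici a, u t = 0 → u' t < 0) (ha : u a ≤ 0) {t : ℝ} (ht : a ≤ t) :
    u t ≤ 0 :=
  image_le_of_deriv_right_lt_deriv_boundary (B := fun _ => 0) (B' := fun _ => 0)
    (hu.mono Icc_subset_Ici_self) (fun x hx => (hu' x hx.1).mono (Ici_subset_Ici.2 hx.1)) ha
    (fun _ => hasDerivAt_const _ _) (fun x hx => hzero x hx.1) ⟨ht, le_rfl⟩

section Riccati

variable {α β σ K : ℝ}

theorem riccati_add_mul_sub_root (hσ : σ ≠ 0) (hK : K ^ 2 = α ^ 2 + 2 * β * σ ^ 2) (x : ℝ) :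
    σ ^ 2 / 2 * x ^ 2 - α * x - β + K * (x - (α - K) / σ ^ 2)
      = σ ^ 2 / 2 * (x - (α - K) / σ ^ 2) ^ 2 := by
  field_simp
  linear_combination hK

theorem sqrt_discr_gt_abs (hσ : σ ≠ 0) (hβ : 0 < β) : |α| < √(α ^ 2 + 2 * β * σ ^ 2) := by
  rw [← Real.sqrt_sq_eq_abs]
  exact Real.sqrt_lt_sqrt (sq_nonneg _) (lt_add_of_pos_right _ (by positivity))

theorem riccati_negRoot_neg (hσ : σ ≠ 0) (hβ : 0 < β) :
    (α - √(α ^ 2 + 2 * β * σ ^ 2)) / σ ^ 2 < 0 :=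
  div_neg_of_neg_of_pos
    (sub_neg.mpr ((le_abs_self α).trans_lt (sqrt_discr_gt_abs hσ hβ))) (by positivity)

theorem riccati_neg_of_mem_Ioc (hσ : σ ≠ 0) (hβ : 0 < β) {x : ℝ}
    (hx : x ∈ Ioc ((α - √(α ^ 2 + 2 * β * σ ^ 2)) / σ ^ 2) 0) :
    σ ^ 2 / 2 * x ^ 2 - α * x - β < 0 := by
  set K := √(α ^ 2 + 2 * β * σ ^ 2)
  have hK : K ^ 2 = α ^ 2 + 2 * β * σ ^ 2 := Real.sq_sqrt (by positivity)
  have hαK : -α < K := (neg_le_abs α).trans_lt (sqrt_discr_gt_abs hσ hβ)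
  have hσ2 : 0 < σ ^ 2 := by positivity
  set d := x - (α - K) / σ ^ 2
  have hd : 0 < d := sub_pos.mpr hx.1
  -- `σ²/2 · d ≤ σ²/2 · (-G₋) = (K - α)/2 < K`
  have hsmall : σ ^ 2 / 2 * d < K := by
    have : σ ^ 2 * d ≤ K - α := by
      simp only [d, mul_sub, mul_div_cancel₀ _ hσ2.ne']
      linarith [hx.2, mul_nonpos_of_nonneg_of_nonpos hσ2.le hx.2]
    linarith
  have hfactor : σ ^ 2 / 2 * x ^ 2 - α * x - β = d * (σ ^ 2 / 2 * d - K) := by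
    linear_combination riccati_add_mul_sub_root hσ hK x
  rw [hfactor]
  exact mul_neg_of_pos_of_neg hd (by linarith)

end Riccati

theorem stmt17_general (α β σ : ℝ) (hβ : 0 < β) (hσ : 0 < σ)
    (G : ℝ → ℝ)
    (hcont : ContinuousOn G (Set.Ici 0))
    (hG0 : G 0 = 0)
    (hG' : ∀ τ ∈ Set.Ici (0 : ℝ),
        HasDerivWithinAt G (σ ^ 2 / 2 * (G τ) ^ 2 - α * G τ - β) (Set.Ici 0) τ) :
    (∀ τ : ℝ, 0 < τ → G τ < 0) ∧
      ∀ τ : ℝ, 0 ≤ τ → (α - Real.sqrt (α ^ 2 + 2 * β * σ ^ 2)) / σ ^ 2 < G τ := by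
  have hσ0 := hσ.ne'
  have hlow : ∀ τ : ℝ, 0 ≤ τ → (α - √(α ^ 2 + 2 * β * σ ^ 2)) / σ ^ 2 < G τ :=
    fun τ hτ => lt_of_hasDerivWithinAt_add_mul_sub_nonneg hcont hG'
      (fun t _ => by rw [riccati_add_mul_sub_root hσ0 (Real.sq_sqrt (by positivity))]; positivity)
      (by rw [hG0]; exact riccati_negRoot_neg hσ0 hβ) hτ
  have hnonpos : ∀ τ : ℝ, 0 ≤ τ → G τ ≤ 0 :=
    fun τ hτ => nonpos_of_hasDerivWithinAt_neg_of_eq_zero hcont hG'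
      (fun t _ ht => by rw [ht]; linarith) hG0.le hτ
  have hanti : StrictAntiOn G (Ici 0) := by
    refine strictAntiOn_of_hasDerivWithinAt_neg
      (f' := fun t => σ ^ 2 / 2 * G t ^ 2 - α * G t - β) (convex_Ici 0) hcont
      (fun t ht => ?_) (fun t ht => ?_)
    · rw [interior_Ici] at ht ⊢
      exact (hG' t (mem_Ici.2 ht.le)).mono Ioi_subset_Ici_self
    · rw [interior_Ici] at ht
      exact riccati_neg_of_mem_Ioc hσ0 hβ ⟨hlow t ht.le, hnonpos t ht.le⟩
  exact ⟨fun τ hτ => hG0 ▸ hanti self_mem_Ici hτ.le hτ, hlow⟩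

/-- A C¹ solution of the Riccati equation G' = (σ²/2)G² - αG - β with G(0) = 0
    satisfies G(τ) < 0 for τ > 0 and stays above the negative root G₋. -/
theorem stmt17 (α β σ : ℝ) (hα : 0 < α) (hβ : 0 < β) (hσ : 0 < σ)
    (G : ℝ → ℝ)
    (hcont : ContinuousOn G (Set.Ici 0))
    (hG0 : G 0 = 0)
    (hG' : ∀ τ ∈ Set.Ici (0 : ℝ),
        HasDerivWithinAt G (σ ^ 2 / 2 * (G τ) ^ 2 - α * G τ - β) (Set.Ici 0) τ) :
    (∀ τ : ℝ, 0 < τ → G τ < 0) ∧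
      ∀ τ : ℝ, 0 ≤ τ → (α - Real.sqrt (α ^ 2 + 2 * β * σ ^ 2)) / σ ^ 2 < G τ :=
  stmt17_general α β σ hβ hσ G hcont hG0 hG'
end
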